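/- Let q ≥ 2 be a prime power. Then lim_{m→∞} binom(2m, m)_q / S(2m) = 1 / θ₃(q^{−1}). -/

import Mathlib

open Filter Matrix
open scoped Topology

/-- The `q`-binomial coefficient `binom(n,k)_q = ∏_{j=0}^{k-1} (q^{n-j}-1)/(q^{k-j}-1)`. -/
noncomputable def qBinom (q n k : ℕ) : ℝ :=
  ∏ j ∈ Finset.range k, ((q : ℝ) ^ (n - j) - 1) / ((q : ℝ) ^ (k - j) - 1)

/-- `S(n) = ∑_{k=0}^n binom(n,k)_q`. -/
noncomputable def Sq (q n : ℕ) : ℝ := ∑ k ∈ Finset.range (n + 1), qBinom q n k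

/-- `K_q = ∏_{j=1}^∞ (1 - q^{-j})`. -/
noncomputable def Kq (q : ℕ) : ℝ := ∏' j : ℕ, (1 - ((q : ℝ))⁻¹ ^ (j + 1))

/-- `K_q(k) = ∏_{j=1}^{k} (1 - q^{-j})`. -/
noncomputable def KqTrunc (q k : ℕ) : ℝ := ∏ j ∈ Finset.range k, (1 - ((q : ℝ))⁻¹ ^ (j + 1))

/-- Jacobi theta constant `θ₂(w) = ∑_{k∈ℤ} w^{(k+1/2)²}`. -/
noncomputable def theta2 (w : ℝ) : ℝ := ∑' k : ℤ, w ^ (((k : ℝ) + 1/2) ^ 2)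

/-- Jacobi theta constant `θ₃(w) = ∑_{k∈ℤ} w^{k²}`. -/
noncomputable def theta3 (w : ℝ) : ℝ := ∑' k : ℤ, w ^ ((k : ℝ) ^ 2)

/-- Condition (⋆): `n²/4 − ε·n + A·√n − k(n)(n−k(n)) → −∞`. -/
def StarCond (A ε : ℝ) (k : ℕ → ℕ) : Prop :=
  Tendsto (fun n : ℕ =>
    (n : ℝ) ^ 2 / 4 - ε * n + A * Real.sqrt n - (k n : ℝ) * ((n : ℝ) - (k n : ℝ)))
    atTop atBot

/-- The set of permutation matrices inside `GL n F`. -/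
def permSet (F : Type) [Field F] (n : ℕ) : Set (GL (Fin n) F) :=
  {M | ∃ σ : Equiv.Perm (Fin n), (M : Matrix (Fin n) (Fin n) F) = σ.permMatrix F}

/-- The set of invertible diagonal matrices inside `GL n F`. -/
def diagSet (F : Type) [Field F] (n : ℕ) : Set (GL (Fin n) F) :=
  {M | ∃ d : Fin n → F, (M : Matrix (Fin n) (Fin n) F) = Matrix.diagonal d}

/-- The permutation group: subgroup of `GL n F` formed by the permutation matrices. -/
def PermGroup (F : Type) [Field F] (n : ℕ) : Subgroup (GL (Fin n) F) :=
  Subgroup.closure (permSet F n)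

/-- The monomial group: subgroup of `GL n F` generated by permutation and diagonal matrices. -/
def MonomialGroup (F : Type) [Field F] (n : ℕ) : Subgroup (GL (Fin n) F) :=
  Subgroup.closure (permSet F n ∪ diagSet F n)

/-- Number of orbits of a subgroup `G ≤ GL n F` acting on the Grassmannian of
`k`-dimensional subspaces of `F^n` (by taking images of subspaces). -/
noncomputable def numClassesDim {n : ℕ} (F : Type) [Field F]
    (G : Subgroup (GL (Fin n) F)) (k : ℕ) : ℕ :=
  Nat.card (Quot (fun V W : {V : Submodule F (Fin n → F) // Module.finrank F V = k} =>
    ∃ M ∈ G, Submodule.map (Matrix.toLin' (M : Matrix (Fin n) (Fin n) F)) V.1 = W.1))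

/-- Number of orbits of a subgroup `G ≤ GL n F` acting on the set of all subspaces of `F^n`. -/
noncomputable def numClasses {n : ℕ} (F : Type) [Field F]
    (G : Subgroup (GL (Fin n) F)) : ℕ :=
  Nat.card (Quot (fun V W : Submodule F (Fin n → F) =>
    ∃ M ∈ G, Submodule.map (Matrix.toLin' (M : Matrix (Fin n) (Fin n) F)) V = W))

/-- Semilinear orbit relation: `W` is the image of `V` under the semilinear transformation
given by applying the field automorphism `σ` componentwise followed by a monomial matrix. -/
def semiRel (F : Type) [Field F] (n : ℕ) (V W : Submodule F (Fin n → F)) : Prop :=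
  ∃ σ : F ≃+* F, ∃ M ∈ MonomialGroup F n,
    (W : Set (Fin n → F)) =
      (fun x => Matrix.mulVec (M : Matrix (Fin n) (Fin n) F) (fun i => σ (x i))) '' (V : Set (Fin n → F))

/-- Number of semilinear equivalence classes of `k`-dimensional subspaces of `F^n`. -/
noncomputable def numClassesDimSemi (F : Type) [Field F] (n k : ℕ) : ℕ :=
  Nat.card (Quot (fun V W : {V : Submodule F (Fin n → F) // Module.finrank F V = k} =>
    semiRel F n V.1 W.1))

/-- Number of semilinear equivalence classes of subspaces of `F^n`. -/
noncomputable def numClassesSemi (F : Type) [Field F] (n : ℕ) : ℕ :=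
  Nat.card (Quot (fun V W : Submodule F (Fin n → F) => semiRel F n V W))


/-! Write `r = q⁻¹`. Factoring `q^i` out of every `q^i - 1` gives
`binom(n,k)_q = q^{k(n-k)} K_q(n) / (K_q(k) K_q(n-k))`, so for `k = m + j` the ratio
`binom(2m,k)_q / binom(2m,m)_q` equals `r^{j²} K_q(m)² / (K_q(m+j) K_q(m-j))`. As `m → ∞` this tends
to `r^{j²}`, and it is bounded by `r^{j²} / K_q²` because the partial products `K_q(k)` decrease to
`K_q > 0`. Dominated convergence over `j ∈ ℤ` turns `S(2m) / binom(2m,m)_q` into `θ₃(r)`. -/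

open Finset

section Theta

lemma theta3_eq_tsum (w : ℝ) : theta3 w = ∑' j : ℤ, w ^ (j.natAbs ^ 2) := by
  refine tsum_congr fun j => ?_
  have hexp : (j : ℝ) ^ 2 = ((j.natAbs ^ 2 : ℕ) : ℝ) := by
    push_cast [Nat.cast_natAbs]
    exact (sq_abs _).symm
  rw [hexp, Real.rpow_natCast]

lemma summable_pow_natAbs_sq {w : ℝ} (hw₀ : 0 ≤ w) (hw₁ : w < 1) :
    Summable fun j : ℤ => w ^ (j.natAbs ^ 2) := by
  have hnat : Summable fun n : ℕ => w ^ (n ^ 2) :=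
    (summable_geometric_of_lt_one hw₀ hw₁).of_nonneg_of_le (fun n => by positivity)
      fun n => pow_le_pow_of_le_one hw₀ hw₁.le (Nat.le_self_pow two_ne_zero n)
  exact .of_nat_of_neg (by simpa using hnat) (by simpa using hnat)

lemma one_le_theta3 {w : ℝ} (hw₀ : 0 ≤ w) (hw₁ : w < 1) : 1 ≤ theta3 w := by
  rw [theta3_eq_tsum]
  simpa using (summable_pow_natAbs_sq hw₀ hw₁).le_tsum 0 fun j _ => by positivity

end Theta

section Kq

variable {q : ℕ} (hq : 1 < q)
include hq

lemma inv_natCast_lt_one : ((q : ℝ))⁻¹ < 1 :=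
  inv_lt_one_of_one_lt₀ (by exact_mod_cast hq)

lemma inv_natCast_pow_lt_one (i : ℕ) : ((q : ℝ))⁻¹ ^ (i + 1) < 1 :=
  pow_lt_one₀ (by positivity) (inv_natCast_lt_one hq) i.succ_ne_zero

lemma KqTrunc_pos (k : ℕ) : 0 < KqTrunc q k :=
  prod_pos fun i _ => sub_pos.2 (inv_natCast_pow_lt_one hq i)

lemma KqTrunc_le_one (k : ℕ) : KqTrunc q k ≤ 1 :=
  prod_le_one (fun i _ => (sub_pos.2 (inv_natCast_pow_lt_one hq i)).le)
    fun i _ => sub_le_self _ (by positivity)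

lemma KqTrunc_antitone : Antitone (KqTrunc q) := by
  refine antitone_nat_of_succ_le fun k => ?_
  rw [KqTrunc, prod_range_succ]
  exact mul_le_of_le_one_right (KqTrunc_pos hq k).le (sub_le_self _ (by positivity))

lemma summable_norm_neg_inv_natCast_pow : Summable fun i : ℕ => ‖-((q : ℝ))⁻¹ ^ (i + 1)‖ := by
  simpa using (summable_nat_add_iff 1).2
    (summable_geometric_of_lt_one (by positivity) (inv_natCast_lt_one hq))

lemma tendsto_KqTrunc : Tendsto (KqTrunc q) atTop (𝓝 (Kq q)) := by
  simp only [Kq, sub_eq_add_neg]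
  exact (multipliable_one_add_of_summable
    (summable_norm_neg_inv_natCast_pow hq)).hasProd.tendsto_prod_nat

lemma Kq_pos : 0 < Kq q := by
  have hne : Kq q ≠ 0 := by
    simp only [Kq, sub_eq_add_neg]
    exact tprod_one_add_ne_zero_of_summable
      (fun i => by rw [← sub_eq_add_neg]; exact (sub_pos.2 (inv_natCast_pow_lt_one hq i)).ne')
      (summable_norm_neg_inv_natCast_pow hq)
  exact (ge_of_tendsto' (tendsto_KqTrunc hq) fun k => (KqTrunc_pos hq k).le).lt_of_ne' hne

lemma Kq_le_KqTrunc (k : ℕ) : Kq q ≤ KqTrunc q k :=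
  (KqTrunc_antitone hq).le_of_tendsto (tendsto_KqTrunc hq) k

end Kq

noncomputable def centralQBinomRatio (q m : ℕ) (j : ℤ) : ℝ :=
  if j.natAbs ≤ m then
    ((q : ℝ))⁻¹ ^ (j.natAbs ^ 2) * KqTrunc q m ^ 2 /
      (KqTrunc q ((m : ℤ) + j).toNat * KqTrunc q ((m : ℤ) - j).toNat)
  else 0

section QBinom

variable {q : ℕ} (hq : 1 < q)
include hq

lemma qBinom_eq_KqTrunc {n k : ℕ} (hkn : k ≤ n) :
    qBinom q n k = (q : ℝ) ^ (k * (n - k)) * KqTrunc q n / (KqTrunc q k * KqTrunc q (n - k)) := by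
  have hq0 : (q : ℝ) ≠ 0 := by positivity
  have hfactor : ∀ j ∈ range k, ((q : ℝ) ^ (n - j) - 1) / ((q : ℝ) ^ (k - j) - 1) =
      (q : ℝ) ^ (n - k) * ((1 - ((q : ℝ))⁻¹ ^ (n - j)) / (1 - ((q : ℝ))⁻¹ ^ (k - j))) := by
    intro j hj
    have hjk : j < k := mem_range.1 hj
    have hsplit : n - j = (n - k) + (k - j) := by omega
    have hne : (q : ℝ) ^ (k - j) ≠ 1 :=
      (one_lt_pow₀ (by exact_mod_cast hq) (by omega)).ne'
    rw [hsplit, inv_pow, inv_pow, pow_add]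
    have := sub_ne_zero.2 hne
    field_simp
  have hden : ∏ j ∈ range k, (1 - ((q : ℝ))⁻¹ ^ (k - j)) = KqTrunc q k := by
    rw [KqTrunc, ← prod_range_reflect]
    exact prod_congr rfl fun j hj => by rw [mem_range] at hj; congr 2; omega
  have hnum : ∏ j ∈ range k, (1 - ((q : ℝ))⁻¹ ^ (n - j)) =
      ∏ i ∈ range k, (1 - ((q : ℝ))⁻¹ ^ (n - k + i + 1)) := by
    rw [← prod_range_reflect]
    exact prod_congr rfl fun j hj => by rw [mem_range] at hj; congr 2; omega
  have hsplit : KqTrunc q n =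
      KqTrunc q (n - k) * ∏ i ∈ range k, (1 - ((q : ℝ))⁻¹ ^ (n - k + i + 1)) := by
    rw [KqTrunc, KqTrunc, ← prod_range_add, Nat.sub_add_cancel hkn]
  rw [qBinom, prod_congr rfl hfactor, prod_mul_distrib, prod_const, card_range, prod_div_distrib,
    hden, hnum, hsplit, ← pow_mul']
  have := (KqTrunc_pos hq (n - k)).ne'
  field_simp

lemma qBinom_div_qBinom_central {m k : ℕ} (hk : k ≤ 2 * m) :
    qBinom q (2 * m) k / qBinom q (2 * m) m = centralQBinomRatio q m ((k : ℤ) - m) := by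
  have hd : ((k : ℤ) - m).natAbs ≤ m := by omega
  have hplus : ((m : ℤ) + ((k : ℤ) - m)).toNat = k := by omega
  have hminus : ((m : ℤ) - ((k : ℤ) - m)).toNat = 2 * m - k := by omega
  have hexp : m * (2 * m - m) = k * (2 * m - k) + ((k : ℤ) - m).natAbs ^ 2 := by
    zify [hk, show m ≤ 2 * m by omega]
    rw [sq_abs]
    ring
  have hq0 : (q : ℝ) ≠ 0 := by positivity
  have := (KqTrunc_pos hq (2 * m)).ne'
  have := (KqTrunc_pos hq k).ne'
  have := (KqTrunc_pos hq (2 * m - k)).ne'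
  have := (KqTrunc_pos hq m).ne'
  rw [centralQBinomRatio, if_pos hd, hplus, hminus, qBinom_eq_KqTrunc hq hk,
    qBinom_eq_KqTrunc hq (by omega), hexp, pow_add, Nat.sub_eq_of_eq_add (two_mul m), inv_pow]
  field_simp

lemma Sq_div_qBinom_central (m : ℕ) :
    Sq q (2 * m) / qBinom q (2 * m) m = ∑' j : ℤ, centralQBinomRatio q m j := by
  have hsupp : ∀ j ∉ Icc (-(m : ℤ)) m, centralQBinomRatio q m j = 0 := fun j hj => by
    rw [mem_Icc] at hj
    rw [centralQBinomRatio, if_neg (by omega)]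
  rw [tsum_eq_sum hsupp, Sq, sum_div]
  refine sum_nbij' (fun k => (k : ℤ) - m) (fun j => (j + m).toNat) ?_ ?_ ?_ ?_ ?_
  all_goals intro x hx
  any_goals simp only [mem_range, mem_Icc] at hx ⊢; omega
  exact qBinom_div_qBinom_central hq (by rw [mem_range] at hx; omega : x ≤ 2 * m)

lemma norm_centralQBinomRatio_le (m : ℕ) (j : ℤ) :
    ‖centralQBinomRatio q m j‖ ≤ ((q : ℝ))⁻¹ ^ (j.natAbs ^ 2) / Kq q ^ 2 := by
  have hKq := Kq_pos hq
  rw [centralQBinomRatio]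
  split_ifs
  · have := KqTrunc_pos hq ((m : ℤ) + j).toNat
    have := KqTrunc_pos hq ((m : ℤ) - j).toNat
    rw [Real.norm_of_nonneg (by positivity)]
    calc _ ≤ ((q : ℝ))⁻¹ ^ (j.natAbs ^ 2) * 1 / (Kq q * Kq q) := by
          gcongr
          · exact pow_le_one₀ (KqTrunc_pos hq m).le (KqTrunc_le_one hq m)
          · exact Kq_le_KqTrunc hq _
          · exact Kq_le_KqTrunc hq _
      _ = _ := by ring
  · rw [norm_zero]
    positivity

lemma tendsto_centralQBinomRatio (j : ℤ) :
    Tendsto (fun m => centralQBinomRatio q m j) atTop (𝓝 (((q : ℝ))⁻¹ ^ (j.natAbs ^ 2))) := by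
  have hK := tendsto_KqTrunc hq
  have hKq := (Kq_pos hq).ne'
  have hplus : Tendsto (fun m : ℕ => ((m : ℤ) + j).toNat) atTop atTop :=
    tendsto_atTop_atTop.2 fun b => ⟨b + j.natAbs, fun m hm => by omega⟩
  have hminus : Tendsto (fun m : ℕ => ((m : ℤ) - j).toNat) atTop atTop :=
    tendsto_atTop_atTop.2 fun b => ⟨b + j.natAbs, fun m hm => by omega⟩
  have hlim := (tendsto_const_nhds (x := ((q : ℝ))⁻¹ ^ (j.natAbs ^ 2))).mul (hK.pow 2) |>.div
    ((hK.comp hplus).mul (hK.comp hminus)) (mul_ne_zero hKq hKq)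
  rw [mul_div_assoc, show Kq q ^ 2 / (Kq q * Kq q) = 1 by field_simp, mul_one] at hlim
  refine hlim.congr' ?_
  filter_upwards [eventually_ge_atTop j.natAbs] with m hm
  simp only [centralQBinomRatio, if_pos hm, Pi.div_apply, Function.comp_apply, mul_div_assoc]

lemma tendsto_Sq_div_qBinom_central :
    Tendsto (fun m => Sq q (2 * m) / qBinom q (2 * m) m) atTop (𝓝 (theta3 ((q : ℝ))⁻¹)) := by
  simp_rw [Sq_div_qBinom_central hq, theta3_eq_tsum]
  exact tendsto_tsum_of_dominated_convergence
    ((summable_pow_natAbs_sq (by positivity) (inv_natCast_lt_one hq)).div_const _)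
    (tendsto_centralQBinomRatio hq) (.of_forall (norm_centralQBinomRatio_le hq))

end QBinom

theorem stmt12 (q : ℕ) (hq : IsPrimePow q) :
    Tendsto (fun m : ℕ => qBinom q (2 * m) m / Sq q (2 * m))
      atTop (𝓝 (1 / theta3 ((q : ℝ))⁻¹)) := by
  have hθ : theta3 ((q : ℝ))⁻¹ ≠ 0 :=
    (zero_lt_one.trans_le (one_le_theta3 (by positivity) (inv_natCast_lt_one hq.one_lt))).ne'
  simpa only [one_div, inv_div] using (tendsto_Sq_div_qBinom_central hq.one_lt).inv₀ hθ
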